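/- arXiv:1108.1524 — 2 statements merged into one kernel-verified Lean document; each statement's English description precedes it below -/
import Mathlib

section
/- Let J̃₀ be the Bessel function of the first kind of order zero. Then for all real x, |J̃₀(x)| ≤ min{1, √(3/(4|x|))} (with the convention that the second bound is only required for x ≠ 0). -/
open Real

/-- The Bessel function of the first kind of order zero, defined by its power series. -/
noncomputable def besselJ0 (x : ℝ) : ℝ :=
  ∑' j : ℕ, (-1) ^ j * x ^ (2 * j) / (2 ^ (2 * j) * (Nat.factorial j) ^ 2)

/-!
On `0 ≤ x ≤ 2` the power series of `J₀` and `J₁` are alternating with decreasing terms, which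
gives `0 ≤ J₀(x) ≤ 1 - x²/5` on `[0, 1]` and enclosures of `J₀(1)` and `J₁(1)`. For `x ≥ 1` we use
`J₀' = -J₁` and `(x J₁)' = x J₀`: the Lyapunov function
`L = x J₀² + x J₁² - J₀ J₁ + J₀²/(2x)` has `L' = -J₀²/(2x²) ≤ 0` and
`L - x J₀² = ((2x J₁ - J₀)² + J₀²)/(4x) ≥ 0`, hence `x J₀(x)² ≤ L(x) ≤ L(1) ≤ 3/4`.
-/

open Finset
open scoped Nat

theorem hasDerivAt_tsum_div_succ_mul_pow_succ {b : ℕ → ℝ}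
    (hb : ∀ r, Summable fun j => b j * r ^ j) (x : ℝ) :
    HasDerivAt (fun t => ∑' j, b j / (j + 1) * t ^ (j + 1)) (∑' j, b j * x ^ j) x := by
  set R := |x| + 1
  refine hasDerivAt_tsum_of_isPreconnected (g := fun j t => b j / (j + 1) * t ^ (j + 1))
    (g' := fun j t => b j * t ^ j) (y₀ := 0) (hb R).abs Metric.isOpen_ball
    (convex_ball 0 R).isPreconnected (fun j t _ => ?_) (fun j t ht => ?_)
    (Metric.mem_ball_self (by positivity)) (by simp) (by simp [R])
  · refine ((hasDerivAt_pow (j + 1) t).const_mul (b j / (j + 1))).congr_deriv ?_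
    rw [Nat.add_sub_cancel, Nat.cast_succ]
    field_simp
  · have ht : |t| ≤ R := by simpa [Real.dist_eq] using (Metric.mem_ball.1 ht).le
    rw [Real.norm_eq_abs, abs_mul, abs_mul, abs_pow, abs_pow, abs_of_nonneg (by positivity : 0 ≤ R)]
    gcongr

noncomputable def besselTerm (n j : ℕ) (x : ℝ) : ℝ := (x / 2) ^ (2 * j + n) / (j ! * (j + n)!)

noncomputable def besselJ (n : ℕ) (x : ℝ) : ℝ := ∑' j, (-1) ^ j * besselTerm n j x

theorem besselJ0_eq_besselJ_zero : besselJ0 = besselJ 0 := by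
  ext x
  refine tsum_congr fun j => ?_
  rw [besselTerm, div_pow, add_zero, add_zero, sq]
  ring

theorem abs_besselTerm_le (n j : ℕ) (x : ℝ) :
    |besselTerm n j x| ≤ |x / 2| ^ n * ((x / 2) ^ 2) ^ j / j ! := by
  have hpow : |(x / 2) ^ (2 * j + n)| = |x / 2| ^ n * ((x / 2) ^ 2) ^ j := by
    rw [abs_pow, pow_add, pow_mul, sq_abs, mul_comm]
  rw [besselTerm, abs_div, hpow, abs_of_pos (by positivity : (0 : ℝ) < j ! * (j + n)!)]
  gcongr
  exact le_mul_of_one_le_right (by positivity) (Nat.one_le_cast.2 (j + n).factorial_pos)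

theorem summable_neg_one_pow_mul_besselTerm (n : ℕ) (x : ℝ) :
    Summable fun j => (-1) ^ j * besselTerm n j x := by
  refine .of_norm_bounded ((summable_pow_div_factorial ((x / 2) ^ 2)).mul_left (|x / 2| ^ n))
    fun j => ?_
  rw [norm_mul, norm_pow, norm_neg, norm_one, one_pow, one_mul, ← mul_div_assoc]
  exact abs_besselTerm_le n j x

theorem hasSum_besselJ (n : ℕ) (x : ℝ) :
    HasSum (fun j => (-1) ^ j * besselTerm n j x) (besselJ n x) :=
  (summable_neg_one_pow_mul_besselTerm n x).hasSum

theorem besselTerm_succ (n j : ℕ) (x : ℝ) :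
    besselTerm n (j + 1) x = besselTerm n j x * ((x / 2) ^ 2 / ((j + 1) * (j + n + 1))) := by
  simp only [besselTerm, show 2 * (j + 1) + n = 2 * j + n + 2 by ring,
    show j + 1 + n = j + n + 1 by ring, Nat.factorial_succ]
  push_cast
  field_simp
  ring

theorem antitone_besselTerm (n : ℕ) {x : ℝ} (hx₀ : 0 ≤ x) (hx₂ : x ≤ 2) :
    Antitone fun j => besselTerm n j x := by
  refine antitone_nat_of_succ_le fun j => ?_
  rw [besselTerm_succ]
  refine mul_le_of_le_one_right (by unfold besselTerm; positivity) ?_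
  rw [div_le_one (by positivity)]
  have : (x / 2) ^ 2 ≤ 1 := by nlinarith
  nlinarith [(j.cast_nonneg : (0 : ℝ) ≤ j), (n.cast_nonneg : (0 : ℝ) ≤ n)]

theorem sum_range_two_mul_le_besselJ (n : ℕ) {x : ℝ} (hx₀ : 0 ≤ x) (hx₂ : x ≤ 2) (k : ℕ) :
    ∑ i ∈ range (2 * k), (-1) ^ i * besselTerm n i x ≤ besselJ n x :=
  (antitone_besselTerm n hx₀ hx₂).alternating_series_le_tendsto
    (hasSum_besselJ n x).tendsto_sum_nat k

theorem besselJ_le_sum_range_two_mul_add_one (n : ℕ) {x : ℝ} (hx₀ : 0 ≤ x) (hx₂ : x ≤ 2) (k : ℕ) :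
    besselJ n x ≤ ∑ i ∈ range (2 * k + 1), (-1) ^ i * besselTerm n i x :=
  (antitone_besselTerm n hx₀ hx₂).tendsto_le_alternating_series
    (hasSum_besselJ n x).tendsto_sum_nat k

noncomputable def besselCoeff (n j : ℕ) : ℝ := (-1) ^ j / (j ! * (j + n)!)

theorem summable_besselCoeff_mul_pow (n : ℕ) (r : ℝ) :
    Summable fun j => besselCoeff n j * r ^ j := by
  refine .of_norm_bounded (summable_pow_div_factorial |r|) fun j => ?_
  rw [norm_mul, norm_pow, Real.norm_eq_abs, Real.norm_eq_abs, besselCoeff, abs_div, abs_pow,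
    abs_neg, abs_one, one_pow, abs_of_pos (by positivity : (0 : ℝ) < j ! * (j + n)!),
    one_div_mul_eq_div]
  gcongr
  exact le_mul_of_one_le_right (by positivity) (Nat.one_le_cast.2 (j + n).factorial_pos)

theorem hasDerivAt_half_sq (x : ℝ) : HasDerivAt (fun y => (y / 2) ^ 2) (x / 2) x :=
  (((hasDerivAt_id' x).div_const 2).pow 2).congr_deriv (by ring)

theorem besselJ_zero_eq_one_add_tsum (y : ℝ) :
    besselJ 0 y = 1 + ∑' j, -besselCoeff 1 j / (j + 1) * ((y / 2) ^ 2) ^ (j + 1) := by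
  rw [besselJ, (summable_neg_one_pow_mul_besselTerm 0 y).tsum_eq_zero_add]
  congr 1
  · simp [besselTerm]
  refine tsum_congr fun j => ?_
  simp only [besselTerm, besselCoeff, Nat.factorial_succ, ← pow_mul]
  push_cast
  field_simp
  ring_nf

theorem mul_besselJ_one_eq_tsum (y : ℝ) :
    y * besselJ 1 y = ∑' j, 2 * besselCoeff 0 j / (j + 1) * ((y / 2) ^ 2) ^ (j + 1) := by
  rw [besselJ, ← tsum_mul_left]
  refine tsum_congr fun j => ?_
  simp only [besselTerm, besselCoeff, Nat.factorial_succ, ← pow_mul]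
  push_cast
  field_simp
  ring_nf

theorem hasDerivAt_besselJ_zero (x : ℝ) : HasDerivAt (besselJ 0) (-besselJ 1 x) x := by
  have hb (r : ℝ) : Summable fun j => -besselCoeff 1 j * r ^ j := by
    simpa only [neg_mul] using (summable_besselCoeff_mul_pow 1 r).neg
  have h := ((hasDerivAt_tsum_div_succ_mul_pow_succ hb ((x / 2) ^ 2)).comp x
    (hasDerivAt_half_sq x)).const_add 1
  rw [funext besselJ_zero_eq_one_add_tsum]
  refine h.congr_deriv ?_
  rw [besselJ, ← tsum_neg, ← tsum_mul_right]
  refine tsum_congr fun j => ?_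
  simp only [besselTerm, besselCoeff, ← pow_mul]
  ring

theorem hasDerivAt_mul_besselJ_one (x : ℝ) :
    HasDerivAt (fun y => y * besselJ 1 y) (x * besselJ 0 x) x := by
  have hb (r : ℝ) : Summable fun j => 2 * besselCoeff 0 j * r ^ j := by
    simpa only [mul_assoc] using (summable_besselCoeff_mul_pow 0 r).mul_left 2
  have h := (hasDerivAt_tsum_div_succ_mul_pow_succ hb ((x / 2) ^ 2)).comp x
    (hasDerivAt_half_sq x)
  rw [funext mul_besselJ_one_eq_tsum]
  refine h.congr_deriv ?_
  rw [besselJ, ← tsum_mul_left, ← tsum_mul_right]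
  refine tsum_congr fun j => ?_
  simp only [besselTerm, besselCoeff, ← pow_mul]
  ring

theorem hasDerivAt_besselJ_one {x : ℝ} (hx : x ≠ 0) :
    HasDerivAt (besselJ 1) (besselJ 0 x - besselJ 1 x / x) x := by
  have h := (hasDerivAt_mul_besselJ_one x).div (hasDerivAt_id' x) hx
  refine (h.congr_of_eventuallyEq ?_).congr_deriv ?_
  · filter_upwards [eventually_ne_nhds hx] with y hy
    simp [hy]
  · field_simp

noncomputable def besselLyapunov (x : ℝ) : ℝ :=
  x * besselJ 0 x ^ 2 + x * besselJ 1 x ^ 2 - besselJ 0 x * besselJ 1 x + besselJ 0 x ^ 2 / (2 * x)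

theorem hasDerivAt_besselLyapunov {x : ℝ} (hx : x ≠ 0) :
    HasDerivAt besselLyapunov (-besselJ 0 x ^ 2 / (2 * x ^ 2)) x := by
  have hJ₀ := hasDerivAt_besselJ_zero x
  have hJ₁ := hasDerivAt_besselJ_one hx
  have h := ((((hasDerivAt_id x).mul (hJ₀.pow 2)).add ((hasDerivAt_id x).mul (hJ₁.pow 2))).sub
    (hJ₀.mul hJ₁)).add ((hJ₀.pow 2).div ((hasDerivAt_id x).const_mul 2) (by simpa))
  refine h.congr_deriv ?_
  simp only [id, Pi.pow_apply]
  field_simp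
  ring

theorem antitoneOn_besselLyapunov : AntitoneOn besselLyapunov (Set.Ioi 0) := by
  have hderiv (x : ℝ) (hx : x ∈ Set.Ioi 0) := hasDerivAt_besselLyapunov (ne_of_gt hx)
  refine antitoneOn_of_deriv_nonpos (convex_Ioi 0)
    (fun x hx => (hderiv x hx).continuousAt.continuousWithinAt) ?_ ?_
  · rw [interior_Ioi]
    exact fun x hx => (hderiv x hx).differentiableAt.differentiableWithinAt
  · rw [interior_Ioi]
    intro x hx
    rw [(hderiv x hx).deriv, neg_div]
    exact neg_nonpos.2 (by positivity)

theorem mul_besselJ_zero_sq_le_besselLyapunov {x : ℝ} (hx : 0 < x) :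
    x * besselJ 0 x ^ 2 ≤ besselLyapunov x := by
  have : besselLyapunov x - x * besselJ 0 x ^ 2 =
      ((2 * x * besselJ 1 x - besselJ 0 x) ^ 2 + besselJ 0 x ^ 2) / (4 * x) := by
    rw [besselLyapunov]
    field_simp
    ring
  rw [← sub_nonneg, this]
  positivity

theorem besselLyapunov_one_le : besselLyapunov 1 ≤ 3 / 4 := by
  have hJ₀l := sum_range_two_mul_le_besselJ 0 zero_le_one one_le_two 2
  have hJ₀u := besselJ_le_sum_range_two_mul_add_one 0 zero_le_one one_le_two 1
  have hJ₁l := sum_range_two_mul_le_besselJ 1 zero_le_one one_le_two 1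
  have hJ₁u := besselJ_le_sum_range_two_mul_add_one 1 zero_le_one one_le_two 1
  norm_num [sum_range_succ, besselTerm, Nat.factorial] at hJ₀l hJ₀u hJ₁l hJ₁u
  rw [besselLyapunov]
  nlinarith [mul_nonneg (sub_nonneg.2 hJ₀l) (sub_nonneg.2 hJ₁l)]

theorem besselJ_zero_mem_Icc {x : ℝ} (hx₀ : 0 ≤ x) (hx₁ : x ≤ 1) :
    besselJ 0 x ∈ Set.Icc 0 (1 - x ^ 2 / 5) := by
  have hl := sum_range_two_mul_le_besselJ 0 hx₀ (by linarith) 1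
  have hu := besselJ_le_sum_range_two_mul_add_one 0 hx₀ (by linarith) 1
  norm_num [sum_range_succ, besselTerm] at hl hu
  have hx2 : x ^ 2 ≤ 1 := by nlinarith
  constructor <;> nlinarith [mul_le_mul_of_nonneg_left hx2 (sq_nonneg x)]

theorem mul_besselJ_zero_sq_le {x : ℝ} (hx : 0 < x) : x * besselJ 0 x ^ 2 ≤ 3 / 4 := by
  rcases le_total x 1 with hx₁ | hx₁
  · obtain ⟨hJ₀, hJ₁⟩ := besselJ_zero_mem_Icc hx.le hx₁
    have hsq : besselJ 0 x ^ 2 ≤ (1 - x ^ 2 / 5) ^ 2 := pow_le_pow_left₀ hJ₀ hJ₁ 2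
    nlinarith [mul_le_mul_of_nonneg_left hsq hx.le, mul_nonneg hx.le (sub_nonneg.2 hx₁),
      mul_nonneg (mul_nonneg hx.le hx.le) (sub_nonneg.2 hx₁)]
  · calc x * besselJ 0 x ^ 2 ≤ besselLyapunov x := mul_besselJ_zero_sq_le_besselLyapunov hx
      _ ≤ besselLyapunov 1 :=
        antitoneOn_besselLyapunov (Set.mem_Ioi.2 one_pos) (Set.mem_Ioi.2 hx) hx₁
      _ ≤ 3 / 4 := besselLyapunov_one_le

theorem abs_besselJ_zero_le_one {x : ℝ} (hx : 0 ≤ x) : |besselJ 0 x| ≤ 1 := by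
  rcases le_total x 1 with hx₁ | hx₁
  · obtain ⟨hJ₀, hJ₁⟩ := besselJ_zero_mem_Icc hx hx₁
    exact abs_le.2 ⟨by linarith, by nlinarith⟩
  · have h := mul_besselJ_zero_sq_le (by linarith : 0 < x)
    exact abs_le_one_iff_mul_self_le_one.2 (by nlinarith)

theorem besselJ0_abs (x : ℝ) : besselJ0 |x| = besselJ0 x := by
  rcases abs_choice x with h | h <;> simp only [h, besselJ0, pow_mul, neg_sq]

/-- `|J₀(x)| ≤ min {1, √(3/(4|x|))}`. -/
theorem abs_besselJ0_le (x : ℝ) :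
    |besselJ0 x| ≤ 1 ∧ (x ≠ 0 → |besselJ0 x| ≤ Real.sqrt (3 / (4 * |x|))) := by
  rw [← besselJ0_abs, besselJ0_eq_besselJ_zero]
  refine ⟨abs_besselJ_zero_le_one (abs_nonneg x), fun hx => abs_le_sqrt ?_⟩
  rw [le_div_iff₀ (by positivity)]
  linarith [mul_besselJ_zero_sq_le (abs_pos.2 hx)]
end

section
/- Let (X_k)_{k≥1} be independent random variables with X_k = cos(2πΘ_k), Θ_k uniform on [0,1], let μ ∈ ℝ, and let (r_k) be nonnegative reals with Σ r_k² = σ² < ∞. Let X = μ + Σ r_k X_k. Then for every V ≥ μ, P(X ≥ V) ≤ exp(-(V-μ)²/(2σ²)). -/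
/-!
Each `X k` is centred and bounded by `1`, so by Hoeffding's lemma it is sub-Gaussian with
parameter `1` (the paper's `E e^{s X_k} = I₀(s) ≤ e^{s²/4}` is sharper than needed). Hence the
partial sums of `∑ r k * X k` are sub-Gaussian with parameter at most `σ²`. When `V > μ` the series
converges on the event `V ≤ μ + ∑' k, r k * X k`, so Fatou's lemma carries the bound on the moment
generating function to the limit, and Chernoff's bound with `s = (V - μ) / σ²` concludes.
-/

open MeasureTheory ProbabilityTheory Real Filter Finset Topology
open scoped ENNReal NNReal

protected theorem AEMeasurable.liminf {α δ : Type*} [CompleteLinearOrder α] [TopologicalSpace α]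
    [OrderTopology α] [SecondCountableTopology α] [MeasurableSpace α] [BorelSpace α]
    {mδ : MeasurableSpace δ} {μ : Measure δ} {f : ℕ → δ → α} (hf : ∀ n, AEMeasurable (f n) μ) :
    AEMeasurable (fun x ↦ liminf (f · x) atTop) μ := by
  simp_rw [liminf_eq_iSup_iInf_of_nat]
  exact .iSup fun _ ↦ .iInf fun i ↦ .iInf fun _ ↦ hf i

namespace ProbabilityTheory

noncomputable def arcsineLaw : Measure ℝ :=
  ((volume : Measure ℝ).restrict (Set.Icc 0 1)).map fun θ ↦ cos (2 * π * θ)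

instance : IsProbabilityMeasure arcsineLaw := by
  have : IsProbabilityMeasure ((volume : Measure ℝ).restrict (Set.Icc 0 1)) :=
    ⟨by simp [Real.volume_Icc]⟩
  exact Measure.isProbabilityMeasure_map (by fun_prop)

lemma hasSubgaussianMGF_id_arcsineLaw : HasSubgaussianMGF id 1 arcsineLaw := by
  have h_bound : ∀ᵐ x ∂arcsineLaw, id x ∈ Set.Icc (-1 : ℝ) 1 :=
    (ae_map_iff (by fun_prop) measurableSet_Icc).2
      (ae_of_all _ fun θ ↦ ⟨neg_one_le_cos _, cos_le_one _⟩)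
  have h_mean : ∫ x, x ∂arcsineLaw = 0 := by
    rw [arcsineLaw, integral_map (by fun_prop) (by fun_prop),
      integral_Icc_eq_integral_Ioc, ← intervalIntegral.integral_of_le zero_le_one,
      intervalIntegral.integral_comp_mul_left (fun x ↦ cos x) (by positivity)]
    simp
  convert hasSubgaussianMGF_of_mem_Icc_of_integral_eq_zero aemeasurable_id h_bound h_mean
  ext
  norm_num

variable {Ω : Type*} {mΩ : MeasurableSpace Ω} {μ : Measure Ω}

lemma HasSubgaussianMGF.mono {X : Ω → ℝ} {c c' : ℝ≥0} (h : HasSubgaussianMGF X c μ)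
    (hc : c ≤ c') : HasSubgaussianMGF X c' μ where
  integrable_exp_mul := h.integrable_exp_mul
  mgf_le t := (h.mgf_le t).trans (by gcongr)

lemma measure_ge_le_of_tendsto_of_mgf_le {S : ℕ → Ω → ℝ} {T : Ω → ℝ} {t ε M : ℝ}
    (hS : ∀ n, AEMeasurable (S n) μ) (ht : 0 ≤ t)
    (h_int : ∀ n, Integrable (fun ω ↦ exp (t * S n ω)) μ) (h_mgf : ∀ n, mgf (S n) μ t ≤ M) :
    μ {ω | ε ≤ T ω ∧ Tendsto (S · ω) atTop (𝓝 (T ω))} ≤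
      ENNReal.ofReal (exp (-t * ε) * M) := by
  set F : ℕ → Ω → ℝ≥0∞ := fun n ω ↦ ENNReal.ofReal (exp (t * S n ω))
  have hF : ∀ n, AEMeasurable (F n) μ := fun n ↦ by fun_prop
  have h_fatou : ∫⁻ ω, liminf (F · ω) atTop ∂μ ≤ ENNReal.ofReal M := by
    refine (lintegral_liminf_le' hF).trans (liminf_le_of_frequently_le' (.of_forall fun n ↦ ?_))
    rw [← ofReal_integral_eq_lintegral_ofReal (h_int n) (ae_of_all _ fun _ ↦ (exp_pos _).le)]
    exact ENNReal.ofReal_le_ofReal (h_mgf n)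
  have h_sub : {ω | ε ≤ T ω ∧ Tendsto (S · ω) atTop (𝓝 (T ω))} ⊆
      {ω | ENNReal.ofReal (exp (t * ε)) ≤ liminf (F · ω) atTop} := by
    rintro ω ⟨hε, hT⟩
    have hF_lim : Tendsto (F · ω) atTop (𝓝 (ENNReal.ofReal (exp (t * T ω)))) :=
      (ENNReal.continuous_ofReal.tendsto _).comp ((continuous_exp.tendsto _).comp (hT.const_mul t))
    rw [Set.mem_ofPred_eq, hF_lim.liminf_eq]
    gcongr
  calc μ {ω | ε ≤ T ω ∧ Tendsto (S · ω) atTop (𝓝 (T ω))}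
      ≤ μ {ω | ENNReal.ofReal (exp (t * ε)) ≤ liminf (F · ω) atTop} := measure_mono h_sub
    _ ≤ (∫⁻ ω, liminf (F · ω) atTop ∂μ) / ENNReal.ofReal (exp (t * ε)) :=
      meas_ge_le_lintegral_div (.liminf hF) (by simp [exp_pos]) ENNReal.ofReal_ne_top
    _ ≤ ENNReal.ofReal M / ENNReal.ofReal (exp (t * ε)) := by gcongr
    _ = ENNReal.ofReal (exp (-t * ε) * M) := by
      rw [← ENNReal.ofReal_div_of_pos (exp_pos _), div_eq_inv_mul, ← exp_neg, neg_mul]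

lemma HasSubgaussianMGF.measureReal_tsum_ge_le {Y : ℕ → Ω → ℝ} {c : ℝ≥0}
    (h : ∀ n, HasSubgaussianMGF (fun ω ↦ ∑ k ∈ range n, Y k ω) c μ) {ε : ℝ} (hε : 0 < ε) :
    μ.real {ω | ε ≤ ∑' k, Y k ω} ≤ exp (-ε ^ 2 / (2 * c)) := by
  -- `0 < ε` excludes the junk value `0` of a divergent series.
  have h_conv : {ω | ε ≤ ∑' k, Y k ω} = {ω | ε ≤ ∑' k, Y k ω ∧
      Tendsto (fun n ↦ ∑ k ∈ range n, Y k ω) atTop (𝓝 (∑' k, Y k ω))} := by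
    refine Set.ext fun ω ↦ ⟨fun (hω : ε ≤ _) ↦ ⟨hω, ?_⟩, And.left⟩
    by_contra h_div
    rw [tsum_eq_zero_of_not_summable fun hY ↦ h_div hY.hasSum.tendsto_sum_nat] at hω
    linarith
  -- `t = ε / c` minimises `-t ε + c t² / 2`; for `c = 0` it is `0` and both sides are `exp 0`.
  have h_chernoff := measure_ge_le_of_tendsto_of_mgf_le (T := fun ω ↦ ∑' k, Y k ω) (ε := ε)
    (fun n ↦ (h n).aemeasurable) (by positivity : 0 ≤ ε / c)
    (fun n ↦ (h n).integrable_exp_mul _) (fun n ↦ (h n).mgf_le _)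
  rw [h_conv]
  refine ENNReal.toReal_le_of_le_ofReal (exp_pos _).le (h_chernoff.trans_eq ?_)
  rw [← exp_add]
  congr 2
  rcases eq_or_ne (c : ℝ) 0 with hc | hc
  · simp [hc]
  · field_simp
    ring

end ProbabilityTheory

theorem tail_bound_of_random_bessel_sum_general
    {Ω : Type*} [MeasureSpace Ω] [IsProbabilityMeasure (ℙ : Measure Ω)]
    (X : ℕ → Ω → ℝ)
    (hindep : iIndepFun X ℙ)
    (hdist : ∀ k, Measure.map (X k) ℙ =
      Measure.map (fun θ : ℝ => Real.cos (2 * Real.pi * θ))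
        ((volume : Measure ℝ).restrict (Set.Icc 0 1)))
    (μ : ℝ) (r : ℕ → ℝ) (σ2 : ℝ)
    (hσ2 : HasSum (fun k => r k ^ 2) σ2) :
    ∀ V : ℝ, μ ≤ V →
      (ℙ {ω | V ≤ μ + ∑' k, r k * X k ω}).toReal ≤
        Real.exp (-(V - μ) ^ 2 / (2 * σ2)) := by
  intro V hV
  obtain rfl | hlt := hV.eq_or_lt
  · simp [← measureReal_def]
  have hσ2_nonneg : 0 ≤ σ2 := hσ2.nonneg fun _ ↦ sq_nonneg _
  have hX (k : ℕ) : HasSubgaussianMGF (X k) 1 ℙ := by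
    have h_law : Measure.map (X k) ℙ = arcsineLaw := hdist k
    have hXk : AEMeasurable (X k) ℙ := .of_map_ne_zero (h_law ▸ IsProbabilityMeasure.ne_zero _)
    exact (HasSubgaussianMGF.id_map_iff hXk).1 (h_law ▸ hasSubgaussianMGF_id_arcsineLaw)
  have h_partial (n : ℕ) :
      HasSubgaussianMGF (fun ω ↦ ∑ k ∈ range n, r k * X k ω) σ2.toNNReal ℙ := by
    refine (HasSubgaussianMGF.sum_of_iIndepFun (hindep.comp (fun k x ↦ r k * x) fun _ ↦ by fun_prop)
      fun k _ ↦ (hX k).const_mul (r k)).mono ?_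
    rw [Real.le_toNNReal_iff_coe_le hσ2_nonneg, NNReal.coe_sum]
    refine (sum_le_hasSum (range n) (fun k _ ↦ sq_nonneg (r k)) hσ2).trans_eq'
      (sum_congr rfl fun k _ ↦ ?_)
    exact (mul_one _).symm
  have h_tail := HasSubgaussianMGF.measureReal_tsum_ge_le h_partial (sub_pos.2 hlt)
  rw [Real.coe_toNNReal _ hσ2_nonneg] at h_tail
  simp_rw [sub_le_iff_le_add'] at h_tail
  exact h_tail

/-- Gaussian-type upper tail bound for a random sum `X = μ + ∑ r_k X_k` of independent
sine-distributed variables `X_k = cos(2πΘ_k)`, `Θ_k` uniform on `[0,1]`: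
for `V ≥ μ`, `P(X ≥ V) ≤ exp(-(V-μ)²/(2σ²))` where `σ² = ∑ r_k²`. -/
theorem tail_bound_of_random_bessel_sum
    {Ω : Type*} [MeasureSpace Ω] [IsProbabilityMeasure (ℙ : Measure Ω)]
    (X : ℕ → Ω → ℝ) (hmeas : ∀ k, Measurable (X k))
    (hindep : iIndepFun X ℙ)
    (hdist : ∀ k, Measure.map (X k) ℙ =
      Measure.map (fun θ : ℝ => Real.cos (2 * Real.pi * θ))
        ((volume : Measure ℝ).restrict (Set.Icc 0 1)))
    (μ : ℝ) (r : ℕ → ℝ) (hr : ∀ k, 0 ≤ r k) (σ2 : ℝ)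
    (hσ2 : HasSum (fun k => r k ^ 2) σ2) :
    ∀ V : ℝ, μ ≤ V →
      (ℙ {ω | V ≤ μ + ∑' k, r k * X k ω}).toReal ≤
        Real.exp (-(V - μ) ^ 2 / (2 * σ2)) :=
  tail_bound_of_random_bessel_sum_general X hindep hdist μ r σ2 hσ2
end
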